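/- Let η_0, η_1, ..., η_t be i.i.d. random vectors in ℝ^d that are sub-Gaussian with parameter C_η σ² (in every unit direction), and let 0 ≤ ρ < 1. Define Y_{t+1} = Σ_{s=0}^{t} ρ^{t−s} ‖η_s‖². Then for any λ with 0 ≤ λ ≤ 1/(4 d C_η σ²), one has E[exp(λ Y_{t+1})] ≤ exp(8 λ d C_η σ² / (1−ρ)). -/

import Mathlib

/-!
Independence turns the expectation of `exp (λ Σₛ ρ^{t-s} ‖ηₛ‖²)` into the product of the
expectations of the factors `exp (λ ρ^{t-s} ‖ηₛ‖²)`. For one factor, Jensen's inequality for `exp`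
splits `‖η‖² = Σᵢ ηᵢ²` over the `d` coordinates, each of which is a real sub-Gaussian variable
`⟪η, eᵢ⟫`. For such a variable `X` with variance proxy `c`, the Chernoff tail
`P(X² ≥ t) ≤ 2 e^{-t/2c}` and the layer-cake formula give `E exp(b X²) ≤ 1 + 8bc ≤ exp(8bc)` as long
as `b ≤ 1/(4c)`. The exponents `8 λ ρ^{t-s} d c` sum to at most `8 λ d c / (1 - ρ)`.
-/

open MeasureTheory ProbabilityTheory Real
open scoped RealInnerProductSpace

noncomputable section

abbrev EVec (d : ℕ) := EuclideanSpace ℝ (Fin d)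

/-- Directional sub-Gaussianity with variance proxy `c`. -/
def SubGDir {Ω : Type} [MeasurableSpace Ω] (μ : Measure Ω) {d : ℕ} (Y : Ω → EVec d)
    (c : ℝ) : Prop :=
  ∀ x : EVec d, ‖x‖ = 1 → ∀ lam : ℝ,
    ∫ ω, Real.exp (lam * ⟪Y ω, x⟫) ∂μ ≤ Real.exp (c * lam ^ 2 / 2)

open scoped NNReal
open Set

lemma lintegral_ofReal_exp_neg_mul_Ioi {ε : ℝ} (hε : 0 < ε) :
    ∫⁻ t in Ioi (0 : ℝ), ENNReal.ofReal (exp (-ε * t)) = ENNReal.ofReal (1 / ε) := by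
  rw [← ofReal_integral_eq_lintegral_ofReal (exp_neg_integrableOn_Ioi 0 hε)
    (.of_forall fun _ ↦ (exp_pos _).le), integral_exp_mul_Ioi (neg_neg_of_pos hε)]
  simp [neg_div_neg_eq]

lemma intervalIntegral_mul_exp_mul (b c : ℝ) :
    ∫ s in (0 : ℝ)..c, b * exp (b * s) = exp (b * c) - 1 := by
  rw [intervalIntegral.integral_const_mul, intervalIntegral.mul_integral_comp_mul_left,
    integral_exp, mul_zero, exp_zero]

section LayerCake

variable {α : Type*} [MeasurableSpace α] {μ : Measure α}

lemma lintegral_ofReal_exp_mul_eq {f : α → ℝ} (hf : AEMeasurable f μ) (hf0 : ∀ a, 0 ≤ f a)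
    {b : ℝ} (hb : 0 ≤ b) :
    ∫⁻ a, ENNReal.ofReal (exp (b * f a)) ∂μ =
      (∫⁻ t in Ioi 0, μ {a | t ≤ f a} * ENNReal.ofReal (b * exp (b * t))) + μ univ := by
  have hcont : Continuous fun t ↦ b * exp (b * t) := by fun_prop
  rw [← lintegral_comp_eq_lintegral_meas_le_mul μ (.of_forall hf0) hf
    (fun _ _ ↦ hcont.intervalIntegrable _ _) (.of_forall fun _ ↦ by positivity),
    ← lintegral_one, ← lintegral_add_right _ measurable_const]
  refine lintegral_congr fun a ↦ ?_
  rw [intervalIntegral_mul_exp_mul, ← ENNReal.ofReal_one, ← ENNReal.ofReal_add _ zero_le_one,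
    sub_add_cancel]
  linarith [one_le_exp (mul_nonneg hb (hf0 a))]

end LayerCake

namespace ProbabilityTheory.HasSubgaussianMGF

variable {Ω : Type*} [MeasurableSpace Ω] {μ : Measure Ω} {X : Ω → ℝ} {c : ℝ≥0}

lemma measure_sq_ge_le [IsFiniteMeasure μ] (h : HasSubgaussianMGF X c μ) {t : ℝ} (ht : 0 ≤ t) :
    μ {ω | t ≤ X ω ^ 2} ≤ ENNReal.ofReal (2 * exp (-t / (2 * c))) := by
  have hsub : {ω | t ≤ X ω ^ 2} ⊆ {ω | √t ≤ X ω} ∪ {ω | √t ≤ (-X) ω} := by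
    intro ω hω
    have : √t ≤ |X ω| := by simpa [sqrt_sq_eq_abs] using Real.sqrt_le_sqrt hω
    exact le_abs.mp this
  have tail : ∀ Z : Ω → ℝ, HasSubgaussianMGF Z c μ →
      μ {ω | √t ≤ Z ω} ≤ ENNReal.ofReal (exp (-t / (2 * c))) := fun Z hZ ↦ by
    rw [← ofReal_measureReal]
    exact ENNReal.ofReal_le_ofReal
      (by simpa [Real.sq_sqrt ht] using hZ.measure_ge_le (sqrt_nonneg t))
  calc μ {ω | t ≤ X ω ^ 2} ≤ μ {ω | √t ≤ X ω} + μ {ω | √t ≤ (-X) ω} :=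
        (measure_mono hsub).trans (measure_union_le _ _)
    _ ≤ ENNReal.ofReal (exp (-t / (2 * c))) + ENNReal.ofReal (exp (-t / (2 * c))) :=
        add_le_add (tail X h) (tail _ h.neg)
    _ = ENNReal.ofReal (2 * exp (-t / (2 * c))) := by
        rw [← ENNReal.ofReal_add (exp_pos _).le (exp_pos _).le, ← two_mul]

lemma lintegral_exp_mul_sq_le [IsProbabilityMeasure μ] (h : HasSubgaussianMGF X c μ) {b : ℝ}
    (hb0 : 0 ≤ b) (hb : b ≤ 1 / (4 * c)) :
    ∫⁻ ω, ENNReal.ofReal (exp (b * X ω ^ 2)) ∂μ ≤ ENNReal.ofReal (exp (8 * b * c)) := by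
  rcases hb0.eq_or_lt with rfl | hb_pos
  · simp
  have hc : 0 < (c : ℝ) := by linarith [one_div_pos.mp (hb_pos.trans_le hb)]
  -- the tails `2 exp (-t / 2c)` beat the weight `b exp (b t)` at rate `ε`
  set ε := 1 / (2 * c) - b with hε_def
  have hε : 1 / (4 * c) ≤ ε := by
    have : 1 / (2 * (c : ℝ)) = 1 / (4 * c) + 1 / (4 * c) := by field_simp; ring
    linarith
  have hε_pos : 0 < ε := (by positivity : (0 : ℝ) < 1 / (4 * c)).trans_le hε
  have hweight : ∀ t ∈ Ioi (0 : ℝ), μ {ω | t ≤ X ω ^ 2} * ENNReal.ofReal (b * exp (b * t)) ≤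
      ENNReal.ofReal (2 * b) * ENNReal.ofReal (exp (-ε * t)) := fun t ht ↦ by
    calc μ {ω | t ≤ X ω ^ 2} * ENNReal.ofReal (b * exp (b * t))
        ≤ ENNReal.ofReal (2 * exp (-t / (2 * c))) * ENNReal.ofReal (b * exp (b * t)) := by
          gcongr; exact h.measure_sq_ge_le (le_of_lt ht)
      _ = ENNReal.ofReal (2 * b) * ENNReal.ofReal (exp (-ε * t)) := by
          rw [← ENNReal.ofReal_mul (by positivity), ← ENNReal.ofReal_mul (by positivity)]
          congr 1
          rw [show -ε * t = -t / (2 * c) + b * t by rw [hε_def]; ring, exp_add]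
          ring
  have hratio : 2 * b / ε ≤ 8 * b * c := calc
    2 * b / ε ≤ 2 * b / (1 / (4 * c)) :=
      div_le_div_of_nonneg_left (by positivity) (by positivity) hε
    _ = 8 * b * c := by field_simp; ring
  calc ∫⁻ ω, ENNReal.ofReal (exp (b * X ω ^ 2)) ∂μ
      = (∫⁻ t in Ioi 0, μ {ω | t ≤ X ω ^ 2} * ENNReal.ofReal (b * exp (b * t))) + 1 := by
        rw [lintegral_ofReal_exp_mul_eq (h.aemeasurable.pow_const 2) (fun _ ↦ sq_nonneg _) hb0,
          measure_univ]
    _ ≤ (∫⁻ t in Ioi 0, ENNReal.ofReal (2 * b) * ENNReal.ofReal (exp (-ε * t))) + 1 := by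
        gcongr 1
        exact setLIntegral_mono' measurableSet_Ioi hweight
    _ = ENNReal.ofReal (2 * b / ε + 1) := by
        rw [lintegral_const_mul' _ _ ENNReal.ofReal_ne_top, lintegral_ofReal_exp_neg_mul_Ioi hε_pos,
          ← ENNReal.ofReal_mul (by positivity), ENNReal.ofReal_add (by positivity) zero_le_one,
          ENNReal.ofReal_one, mul_one_div]
    _ ≤ ENNReal.ofReal (exp (8 * b * c)) := by
        gcongr
        linarith [add_one_le_exp (8 * b * c)]

end ProbabilityTheory.HasSubgaussianMGF

lemma exp_sum_le_sum_inv_card_mul_exp {ι : Type*} [Fintype ι] [Nonempty ι] (x : ι → ℝ) :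
    exp (∑ i, x i) ≤ ∑ i, (Fintype.card ι : ℝ)⁻¹ * exp (Fintype.card ι * x i) := by
  have hn : (Fintype.card ι : ℝ) ≠ 0 := by positivity
  have := convexOn_exp.map_sum_le (t := Finset.univ) (w := fun _ ↦ (Fintype.card ι : ℝ)⁻¹)
    (p := fun i ↦ Fintype.card ι * x i) (fun _ _ ↦ by positivity)
    (by simp [Finset.card_univ, hn]) (fun _ _ ↦ mem_univ _)
  simpa [smul_eq_mul, inv_mul_cancel_left₀ hn] using this

section EuclideanSpace

variable {Ω ι : Type*} [MeasurableSpace Ω] {μ : Measure Ω} [IsProbabilityMeasure μ] [Fintype ι]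

lemma lintegral_exp_mul_sq_norm_le_of_hasSubgaussianMGF {Y : Ω → EuclideanSpace ℝ ι} {c : ℝ≥0}
    (hY : ∀ i, HasSubgaussianMGF (fun ω ↦ Y ω i) c μ) {a : ℝ} (ha0 : 0 ≤ a)
    (ha : a * Fintype.card ι ≤ 1 / (4 * c)) :
    ∫⁻ ω, ENNReal.ofReal (exp (a * ‖Y ω‖ ^ 2)) ∂μ ≤
      ENNReal.ofReal (exp (8 * a * Fintype.card ι * c)) := by
  cases isEmpty_or_nonempty ι
  · simp [EuclideanSpace.real_norm_sq_eq]
  set n : ℝ := (Fintype.card ι : ℝ)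
  have hn : 0 < n := by positivity
  have hmeas : ∀ i, AEMeasurable (fun ω ↦ ENNReal.ofReal (exp (n * (a * Y ω i ^ 2)))) μ :=
    fun i ↦ (((hY i).aemeasurable.pow_const 2).const_mul a |>.const_mul n).exp.ennreal_ofReal
  calc ∫⁻ ω, ENNReal.ofReal (exp (a * ‖Y ω‖ ^ 2)) ∂μ
      ≤ ∫⁻ ω, ∑ i, ENNReal.ofReal n⁻¹ * ENNReal.ofReal (exp (n * (a * Y ω i ^ 2))) ∂μ := by
        refine lintegral_mono fun ω ↦ ?_
        simp_rw [← ENNReal.ofReal_mul (inv_nonneg.mpr hn.le)]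
        rw [← ENNReal.ofReal_sum_of_nonneg fun _ _ ↦ by positivity,
          EuclideanSpace.real_norm_sq_eq, Finset.mul_sum]
        exact ENNReal.ofReal_le_ofReal (exp_sum_le_sum_inv_card_mul_exp _)
    _ = ∑ i, ENNReal.ofReal n⁻¹ * ∫⁻ ω, ENNReal.ofReal (exp (n * a * Y ω i ^ 2)) ∂μ := by
        rw [lintegral_finsetSum' _ fun i _ ↦ (hmeas i).const_mul _]
        simp_rw [lintegral_const_mul'' _ (hmeas _), mul_assoc]
    _ ≤ ∑ _i : ι, ENNReal.ofReal n⁻¹ * ENNReal.ofReal (exp (8 * (n * a) * c)) := by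
        gcongr with i
        exact (hY i).lintegral_exp_mul_sq_le (by positivity) (by rwa [mul_comm])
    _ = ENNReal.ofReal (exp (8 * a * n * c)) := by
        rw [Finset.sum_const, Finset.card_univ, nsmul_eq_mul, ← mul_assoc,
          ← ENNReal.ofReal_natCast, ← ENNReal.ofReal_mul hn.le, mul_inv_cancel₀ hn.ne',
          ENNReal.ofReal_one, one_mul]
        ring_nf

end EuclideanSpace

lemma integrable_exp_of_le {Ω : Type*} [MeasurableSpace Ω] {μ : Measure Ω} {f g : Ω → ℝ}
    (hf : Integrable (fun ω ↦ exp (f ω)) μ) (hg : AEStronglyMeasurable g μ) (hgf : ∀ ω, g ω ≤ f ω) :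
    Integrable (fun ω ↦ exp (g ω)) μ :=
  hf.mono' (by fun_prop) (.of_forall fun ω ↦ by simpa [abs_of_pos (exp_pos _)] using hgf ω)

lemma integrable_exp_mul_of_integrable_exp_mul_sq {Ω : Type*} [MeasurableSpace Ω] {μ : Measure Ω}
    {X : Ω → ℝ} (hX : AEStronglyMeasurable X μ) {a : ℝ} (ha : 0 < a)
    (h : Integrable (fun ω ↦ exp (a * X ω ^ 2)) μ) (u : ℝ) :
    Integrable (fun ω ↦ exp (u * X ω)) μ := by
  refine (h.const_mul (exp (u ^ 2 / (4 * a)))).mono' (by fun_prop)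
    (.of_forall fun ω ↦ ?_)
  rw [norm_of_nonneg (exp_pos _).le, ← exp_add, exp_le_exp]
  have : u ^ 2 / (4 * a) + a * X ω ^ 2 - u * X ω = (2 * a * X ω - u) ^ 2 / (4 * a) := by
    field_simp; ring
  linarith [div_nonneg (sq_nonneg (2 * a * X ω - u)) (by positivity : (0 : ℝ) ≤ 4 * a)]

namespace SubGDir

variable {Ω : Type} [MeasurableSpace Ω] {μ : Measure Ω} {d : ℕ} {Y : Ω → EVec d} {c : ℝ}

/-- `SubGDir` bounds Bochner integrals, which are `0` for non-integrable functions: the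
integrability of the coordinate MGFs has to come from that of `exp (a ‖Y‖²)`. -/
lemma hasSubgaussianMGF_apply (h : SubGDir μ Y c) (hY : Measurable Y) {a : ℝ} (ha : 0 < a)
    (hint : Integrable (fun ω ↦ exp (a * ‖Y ω‖ ^ 2)) μ) (i : Fin d) :
    HasSubgaussianMGF (fun ω ↦ Y ω i) c.toNNReal μ where
  integrable_exp_mul := by
    have hYi : Measurable fun ω ↦ Y ω i := by fun_prop
    refine integrable_exp_mul_of_integrable_exp_mul_sq hYi.aestronglyMeasurable ha
      (integrable_exp_of_le hint (by fun_prop) fun ω ↦ ?_)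
    rw [← sq_abs, ← Real.norm_eq_abs]
    gcongr
    exact PiLp.norm_apply_le (Y ω) i
  mgf_le u := calc
    mgf (fun ω ↦ Y ω i) μ u ≤ exp (c * u ^ 2 / 2) := by
      simpa [mgf, EuclideanSpace.inner_single_right] using h (EuclideanSpace.single i 1) (by simp) u
    _ ≤ exp (c.toNNReal * u ^ 2 / 2) := by have := c.le_coe_toNNReal; gcongr

lemma lintegral_exp_mul_sq_norm_le [IsProbabilityMeasure μ] (h : SubGDir μ Y c)
    (hY : Measurable Y) {a : ℝ} (ha0 : 0 ≤ a) (ha : a * d ≤ 1 / (4 * c))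
    (hint : Integrable (fun ω ↦ exp (a * ‖Y ω‖ ^ 2)) μ) :
    ∫⁻ ω, ENNReal.ofReal (exp (a * ‖Y ω‖ ^ 2)) ∂μ ≤ ENNReal.ofReal (exp (8 * a * d * c)) := by
  rcases ha0.eq_or_lt with rfl | ha_pos
  · simp
  have hc : 0 ≤ c := by
    have : 0 ≤ 1 / (4 * c) := (by positivity : 0 ≤ a * d).trans ha
    rw [one_div_nonneg] at this
    linarith
  simpa [Real.coe_toNNReal c hc] using lintegral_exp_mul_sq_norm_le_of_hasSubgaussianMGF
    (h.hasSubgaussianMGF_apply hY ha_pos hint) ha0 (by simpa [Real.coe_toNNReal c hc] using ha)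

end SubGDir

lemma lintegral_ofReal_exp_sum_eq_prod_of_iIndepFun {Ω ι E : Type*} [MeasurableSpace Ω]
    [MeasurableSpace E] {μ : Measure Ω} {X : ι → Ω → E} (hX : iIndepFun X μ)
    (hXm : ∀ i, Measurable (X i)) {f : ι → E → ℝ} (hf : ∀ i, Measurable (f i)) (s : Finset ι) :
    ∫⁻ ω, ENNReal.ofReal (exp (∑ i ∈ s, f i (X i ω))) ∂μ =
      ∏ i ∈ s, ∫⁻ ω, ENNReal.ofReal (exp (f i (X i ω))) ∂μ := by
  simp_rw [exp_sum, ENNReal.ofReal_prod_of_nonneg fun _ _ ↦ (exp_pos _).le]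
  exact lintegral_prod_eq_prod_lintegral_of_indepFun s _
    (hX.comp (fun i y ↦ ENNReal.ofReal (exp (f i y))) fun i ↦ by fun_prop)
    fun i ↦ by fun_prop

lemma integral_exp_sum_le_of_iIndepFun {Ω ι E : Type*} [MeasurableSpace Ω] [MeasurableSpace E]
    {μ : Measure Ω} {X : ι → Ω → E} (hX : iIndepFun X μ) (hXm : ∀ i, Measurable (X i))
    {f : ι → E → ℝ} (hf : ∀ i, Measurable (f i)) {s : Finset ι} (hf0 : ∀ i ∈ s, ∀ y, 0 ≤ f i y)
    {B : ι → ℝ} (hB : ∀ i ∈ s, Integrable (fun ω ↦ exp (f i (X i ω))) μ →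
      ∫⁻ ω, ENNReal.ofReal (exp (f i (X i ω))) ∂μ ≤ ENNReal.ofReal (exp (B i))) :
    ∫ ω, exp (∑ i ∈ s, f i (X i ω)) ∂μ ≤ exp (∑ i ∈ s, B i) := by
  by_cases hint : Integrable (fun ω ↦ exp (∑ i ∈ s, f i (X i ω))) μ
  swap
  · rw [integral_undef hint]; positivity
  rw [integral_eq_lintegral_of_nonneg_ae (.of_forall fun _ ↦ (exp_pos _).le) hint.1,
    lintegral_ofReal_exp_sum_eq_prod_of_iIndepFun hX hXm hf]
  refine ENNReal.toReal_le_of_le_ofReal (exp_pos _).le ?_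
  rw [exp_sum, ENNReal.ofReal_prod_of_nonneg fun _ _ ↦ (exp_pos _).le]
  refine Finset.prod_le_prod' fun i hi ↦ hB i hi
    (integrable_exp_of_le hint ((hf i).comp (hXm i)).aestronglyMeasurable fun ω ↦ ?_)
  exact Finset.single_le_sum (f := fun j ↦ f j (X j ω)) (fun j hj ↦ hf0 j hj _) hi

lemma sum_range_succ_mul_pow_sub_le {ρ K : ℝ} (hρ0 : 0 ≤ ρ) (hρ : ρ < 1) (hK : 0 ≤ K) (t : ℕ) :
    ∑ s ∈ Finset.range (t + 1), K * ρ ^ (t - s) ≤ K / (1 - ρ) := by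
  have hreflect := Finset.sum_range_reflect (fun k ↦ ρ ^ k) (t + 1)
  simp only [add_tsub_cancel_right] at hreflect
  rw [← Finset.mul_sum, hreflect, Finset.range_eq_Ico, ← mul_one_div]
  gcongr
  simpa using geom_sum_Ico_le_of_lt_one (m := 0) (n := t + 1) hρ0 hρ

theorem geometric_noise_concentration_general
    {Ω : Type} [MeasurableSpace Ω] (μ : Measure Ω) [IsProbabilityMeasure μ]
    {d : ℕ} (σ Cη : ℝ)
    (ρ : ℝ) (hρ0 : 0 ≤ ρ) (hρ : ρ < 1)
    (η : ℕ → Ω → EVec d)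
    (hηmeas : ∀ s, Measurable (η s))
    (hηindep : iIndepFun η μ)
    (hηsub : ∀ s, SubGDir μ (η s) (Cη * σ ^ 2))
    (lam : ℝ) (hlam0 : 0 ≤ lam) (hlam : lam ≤ 1 / (4 * d * Cη * σ ^ 2)) (t : ℕ) :
    ∫ ω, Real.exp (lam * ∑ s ∈ Finset.range (t + 1), ρ ^ (t - s) * ‖η s ω‖ ^ 2) ∂μ ≤
      Real.exp (8 * lam * d * Cη * σ ^ 2 / (1 - ρ)) := by
  rcases hlam0.eq_or_lt with rfl | hlam_pos
  · simp
  have hdc : 0 < 4 * d * Cη * σ ^ 2 := one_div_pos.mp (hlam_pos.trans_le hlam)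
  have hc : 0 < Cη * σ ^ 2 := pos_of_mul_pos_right (a := 4 * (d : ℝ)) (by linarith) (by positivity)
  have hcoef (s : ℕ) : lam * ρ ^ (t - s) * d ≤ 1 / (4 * (Cη * σ ^ 2)) := by
    rw [le_div_iff₀ (by positivity)]
    have hρs : ρ ^ (t - s) ≤ 1 := pow_le_one₀ hρ0 hρ.le
    nlinarith [(le_div_iff₀ hdc).mp hlam, mul_nonneg (mul_nonneg hlam0 hdc.le) (sub_nonneg.mpr hρs)]
  simp_rw [Finset.mul_sum, ← mul_assoc]
  calc _ ≤ exp (∑ s ∈ Finset.range (t + 1), 8 * lam * d * (Cη * σ ^ 2) * ρ ^ (t - s)) :=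
        integral_exp_sum_le_of_iIndepFun hηindep hηmeas (f := fun s y ↦ lam * ρ ^ (t - s) * ‖y‖ ^ 2)
          (fun _ ↦ by fun_prop) (fun _ _ _ ↦ by positivity) fun s _ hint ↦
          ((hηsub s).lintegral_exp_mul_sq_norm_le (hηmeas s) (by positivity) (hcoef s)
            hint).trans_eq (by ring_nf)
    _ ≤ exp (8 * lam * d * (Cη * σ ^ 2) / (1 - ρ)) := by
        gcongr; exact sum_range_succ_mul_pow_sub_le hρ0 hρ (by positivity) t
    _ = _ := by ring_nf

/-- For i.i.d. centered `C_η σ²`-sub-Gaussian random vectors `η_s` in `ℝ^d`,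
`0 ≤ ρ < 1` and `Y_{t+1} = Σ_{s=0}^t ρ^{t−s} ‖η_s‖²`, one has
`E[exp(λ Y_{t+1})] ≤ exp(8 λ d C_η σ²/(1−ρ))` for `0 ≤ λ ≤ 1/(4 d C_η σ²)`. -/
theorem geometric_noise_concentration
    {Ω : Type} [MeasurableSpace Ω] (μ : Measure Ω) [IsProbabilityMeasure μ]
    {d : ℕ} (σ Cη : ℝ) (hσ : 0 < σ) (hCη : 0 < Cη)
    (ρ : ℝ) (hρ0 : 0 ≤ ρ) (hρ : ρ < 1)
    (η : ℕ → Ω → EVec d)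
    (hηmeas : ∀ s, Measurable (η s))
    (hηindep : iIndepFun η μ)
    (hηid : ∀ s t, Measure.map (η s) μ = Measure.map (η t) μ)
    (hηmean : ∀ s i, ∫ ω, η s ω i ∂μ = 0)
    (hηsub : ∀ s, SubGDir μ (η s) (Cη * σ ^ 2))
    (lam : ℝ) (hlam0 : 0 ≤ lam) (hlam : lam ≤ 1 / (4 * d * Cη * σ ^ 2)) (t : ℕ) :
    ∫ ω, Real.exp (lam * ∑ s ∈ Finset.range (t + 1), ρ ^ (t - s) * ‖η s ω‖ ^ 2) ∂μ ≤
      Real.exp (8 * lam * d * Cη * σ ^ 2 / (1 - ρ)) :=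
  geometric_noise_concentration_general μ σ Cη ρ hρ0 hρ η hηmeas hηindep hηsub lam hlam0 hlam t
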